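/- arXiv:1605.09274 — 3 statements merged into one kernel-verified Lean document; each statement's English description precedes it below -/
import Mathlib

section
/- Let n ≥ 1 and let C be an additive cyclic group of order n with a fixed generator g (for example C = ZMod n with g = 1). Let l ≥ 1, let k₁, …, k_l be nonnegative integers and a₁, …, a_l ∈ C. Suppose that the union over i ∈ {1,…,l} of the arithmetic progressions { a_i + j•g : j ∈ ℕ, 0 ≤ j ≤ k_i } equals all of C. Then there exist nonnegative integers m₁, …, m_l with m_i ≤ k_i + 1 for every i, with m₁ + ⋯ + m_l = n, and such that the union over i ∈ {1,…,l} of the initial segments { a_i + j•g : j ∈ ℕ, 0 ≤ j ≤ m_i − 1 } (the empty set when m_i = 0) equals all of C. -/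
namespace CCLaux
set_option linter.unusedSectionVars false
variable {C : Type*} [AddCommGroup C] [Fintype C] [DecidableEq C]

def CCov (g : C) {l : ℕ} (a : Fin l → C) (K : Fin l → ℕ) (x : C) : Prop :=
  ∃ i : Fin l, ∃ j : ℕ, j < K i ∧ x = a i + j • g

def ccnt (g : C) {l : ℕ} (a : Fin l → C) (K : Fin l → ℕ) (x : C) : ℕ :=
  ∑ i, ((Finset.range (K i)).filter (fun j => x = a i + j • g)).card

lemma sum_ccnt (g : C) {l : ℕ} (a : Fin l → C) (K : Fin l → ℕ) :
    ∑ x : C, ccnt g a K x = ∑ i, K i := by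
  unfold ccnt
  rw [Finset.sum_comm]
  refine Finset.sum_congr rfl fun i _ => ?_
  have h := Finset.card_eq_sum_card_fiberwise
    (f := fun j : ℕ => a i + j • g) (s := Finset.range (K i)) (t := Finset.univ)
    (fun x _ => Finset.mem_univ _)
  rw [Finset.card_range] at h
  conv_rhs => rw [h]
  refine Finset.sum_congr rfl fun x _ => ?_
  congr 1
  ext j
  simp [eq_comm]

lemma ccnt_pos {g : C} {l : ℕ} {a : Fin l → C} {K : Fin l → ℕ} {x : C}
    (h : CCov g a K x) : 1 ≤ ccnt g a K x := by
  obtain ⟨i, j, hj, hx⟩ := h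
  have h1 : 1 ≤ ((Finset.range (K i)).filter (fun j => x = a i + j • g)).card := by
    rw [Nat.one_le_iff_ne_zero, ← Nat.pos_iff_ne_zero, Finset.card_pos]
    exact ⟨j, by simp [Finset.mem_filter, Finset.mem_range, hj, hx]⟩
  calc 1 ≤ _ := h1
    _ ≤ _ := Finset.single_le_sum (f := fun i => ((Finset.range (K i)).filter
        (fun j => x = a i + j • g)).card) (fun _ _ => Nat.zero_le _) (Finset.mem_univ i)

lemma le_sum_of_cover {n : ℕ} (hcard : Fintype.card C = n) (g : C) {l : ℕ}
    {a : Fin l → C} {K : Fin l → ℕ} (hcov : ∀ x, CCov g a K x) :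
    n ≤ ∑ i, K i := by
  rw [← sum_ccnt g a K]
  calc n = ∑ _x : C, 1 := by simp [hcard]
    _ ≤ _ := Finset.sum_le_sum fun x _ => ccnt_pos (hcov x)

lemma shrink {n : ℕ} (hn : 1 ≤ n) (hcard : Fintype.card C = n) {g : C}
    (h0 : n • g = 0)
    (hinj : ∀ p q : ℕ, p < n → q < n → p • g = q • g → p = q)
    (hgen : ∀ x y : C, ∃ j : ℕ, y = x + j • g)
    {l : ℕ} {a : Fin l → C} {K : Fin l → ℕ}
    (hcov : ∀ x, CCov g a K x) (hbig : n < ∑ i, K i) :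
    ∃ i, 1 ≤ K i ∧ ∀ x, CCov g a (Function.update K i (K i - 1)) x := by
  by_contra hcon
  push_neg at hcon
  set e : Fin l → C := fun i => a i + (K i - 1) • g with he_def
  -- the missing point of the i-th shrunk family is exactly e i
  have hmiss : ∀ i, 1 ≤ K i → ¬ CCov g a (Function.update K i (K i - 1)) (e i) := by
    intro i hi
    obtain ⟨x, hx⟩ := hcon i hi
    obtain ⟨j, p, hp, hxe⟩ := hcov x
    have hji : j = i := by
      by_contra hne
      exact hx ⟨j, p, by rwa [Function.update_of_ne hne], hxe⟩
    subst hji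
    have hpi : p = K j - 1 := by
      by_contra hne
      have hplt : p < K j - 1 := by omega
      exact hx ⟨j, p, by rw [Function.update_self]; exact hplt, hxe⟩
    have hxi : x = e j := by rw [hxe, hpi]
    rwa [hxi] at hx
  -- uniqueness: e i is covered only as the last point of segment i
  have h1 : ∀ i, 1 ≤ K i → ∀ j p, p < K j → e i = a j + p • g → j = i ∧ p = K i - 1 := by
    intro i hi j p hp heq
    by_cases hji : j = i
    · subst hji
      refine ⟨rfl, ?_⟩
      by_contra hne
      have hplt : p < K j - 1 := by omega
      exact hmiss j hi ⟨j, p, by rw [Function.update_self]; exact hplt, heq⟩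
    · exact absurd ⟨j, p, by rw [Function.update_of_ne hji]; exact hp, heq⟩ (hmiss i hi)
  -- all segments have length at most n
  have h2 : ∀ i, K i ≤ n := by
    intro i
    by_contra h
    push_neg at h
    have hi : 1 ≤ K i := by omega
    apply hmiss i hi
    refine ⟨i, K i - 1 - n, by rw [Function.update_self]; omega, ?_⟩
    show e i = a i + (K i - 1 - n) • g
    have hsplit : (K i - 1) • g = (K i - 1 - n) • g + n • g := by
      rw [← add_nsmul]; congr 1; omega
    simp only [he_def]
    rw [hsplit, h0, add_zero]
  have hinj' : ∀ (i : Fin l) (p q : ℕ), p < K i → q < K i →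
      a i + p • g = a i + q • g → p = q := by
    intro i p q hp hq h
    exact hinj p q (lt_of_lt_of_le hp (h2 i)) (lt_of_lt_of_le hq (h2 i)) (add_left_cancel h)
  -- e i is covered exactly once
  have hcnt_e : ∀ i, 1 ≤ K i → ccnt g a K (e i) = 1 := by
    intro i hi
    unfold ccnt
    rw [Finset.sum_eq_single i]
    · have hfe : (Finset.range (K i)).filter (fun j => e i = a i + j • g) = {K i - 1} := by
        ext p
        simp only [Finset.mem_filter, Finset.mem_range, Finset.mem_singleton]
        constructor
        · rintro ⟨hp, heq⟩; exact (h1 i hi i p hp heq).2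
        · rintro rfl; exact ⟨by omega, rfl⟩
      rw [hfe, Finset.card_singleton]
    · intro j _ hji
      rw [Finset.card_eq_zero, Finset.filter_eq_empty_iff]
      intro p hp heq
      exact hji ((h1 i hi j p (Finset.mem_range.mp hp) heq).1)
    · intro h; exact absurd (Finset.mem_univ i) h
  -- start / end point counting functions
  set A : C → ℕ := fun x => (Finset.univ.filter (fun i => 1 ≤ K i ∧ a i = x)).card with hA_def
  set E : C → ℕ := fun x => (Finset.univ.filter (fun i => 1 ≤ K i ∧ e i = x)).card with hE_def
  have hE1 : ∀ x, E x ≤ 1 := by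
    intro x
    apply Finset.card_le_one.mpr
    intro i hi j hj
    simp only [Finset.mem_filter, Finset.mem_univ, true_and] at hi hj
    have := h1 j hj.1 i (K i - 1) (by omega)
      (by rw [hj.2, ← hi.2])
    exact this.1
  have hAE : ∀ y, E y ≤ A (y + g) := by
    intro y
    rcases Nat.eq_zero_or_pos (E y) with h | h
    · omega
    · have hEp : ∃ i, 1 ≤ K i ∧ e i = y := by
        have := Finset.card_pos.mp h
        obtain ⟨i, hi⟩ := this
        simp only [Finset.mem_filter, Finset.mem_univ, true_and] at hi
        exact ⟨i, hi⟩
      obtain ⟨i, hKi, hei⟩ := hEp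
      obtain ⟨j, p, hp, heq⟩ := hcov (y + g)
      have hp0 : p = 0 := by
        by_contra hne
        have hp1 : 1 ≤ p := by omega
        have hstep : e i = a j + (p - 1) • g := by
          have hsucc : p • g = (p - 1) • g + g := by
            conv_lhs => rw [show p = (p - 1) + 1 by omega]
            rw [succ_nsmul]
          rw [hsucc, ← add_assoc] at heq
          have hc := add_right_cancel heq
          rw [hei]; exact hc
        obtain ⟨hji, hpe⟩ := h1 i hKi j (p - 1) (by omega) hstep
        subst hji
        omega
      subst hp0
      have haj : a j = y + g := by
        rw [zero_nsmul, add_zero] at heq; exact heq.symm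
      have hKj : 1 ≤ K j := by omega
      have hAp : 1 ≤ A (y + g) := by
        rw [Nat.one_le_iff_ne_zero, ← Nat.pos_iff_ne_zero, Finset.card_pos]
        exact ⟨j, by simp [hKj, haj]⟩
      calc E y ≤ 1 := hE1 y
        _ ≤ _ := hAp
  -- the key local identity
  have hkey : ∀ y, ccnt g a K (y + g) + E y = ccnt g a K y + A (y + g) := by
    intro y
    have hAx : A (y + g) = ∑ i, (if 1 ≤ K i ∧ a i = y + g then 1 else 0) := by
      simp only [hA_def, Finset.card_filter]
    have hEx : E y = ∑ i, (if 1 ≤ K i ∧ e i = y then 1 else 0) := by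
      simp only [hE_def, Finset.card_filter]
    unfold ccnt
    rw [hAx, hEx, ← Finset.sum_add_distrib, ← Finset.sum_add_distrib]
    refine Finset.sum_congr rfl fun i _ => ?_
    rcases Nat.eq_zero_or_pos (K i) with hKi | hKi
    · simp [hKi]
    · obtain ⟨s, hs⟩ : ∃ s, K i = s + 1 := ⟨K i - 1, by omega⟩
      have he_i : e i = a i + s • g := by
        simp only [he_def]
        rw [hs]
        simp
      have hesy : (1 ≤ K i ∧ e i = y) ↔ (y = a i + s • g) := by
        rw [he_i]
        exact ⟨fun h => h.2.symm, fun h => ⟨by omega, h.symm⟩⟩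
      have c1 : ((Finset.range (s + 1)).filter (fun j => y + g = a i + j • g)).card
          = (if 1 ≤ K i ∧ a i = y + g then 1 else 0)
            + ((Finset.range s).filter (fun j => y = a i + j • g)).card := by
        rw [Finset.card_filter, Finset.card_filter, Finset.sum_range_succ']
        have ht : ∀ q, (if y + g = a i + (q + 1) • g then (1:ℕ) else 0)
            = (if y = a i + q • g then (1:ℕ) else 0) := by
          intro q
          refine if_congr ?_ rfl rfl
          rw [succ_nsmul, ← add_assoc]
          exact ⟨fun h => add_right_cancel h, fun h => by rw [h]⟩
        rw [Finset.sum_congr rfl (fun q _ => ht q)]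
        have hz : (if y + g = a i + 0 • g then (1:ℕ) else 0)
            = (if 1 ≤ K i ∧ a i = y + g then 1 else 0) := by
          refine if_congr ?_ rfl rfl
          rw [zero_nsmul, add_zero, eq_comm]
          exact ⟨fun h => ⟨hKi, h⟩, fun h => h.2⟩
        rw [hz, add_comm]
      have c2 : ((Finset.range (s + 1)).filter (fun j => y = a i + j • g)).card
          = ((Finset.range s).filter (fun j => y = a i + j • g)).card
            + (if 1 ≤ K i ∧ e i = y then 1 else 0) := by
        rw [Finset.range_add_one, Finset.filter_insert]
        by_cases hy : y = a i + s • g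
        · rw [if_pos hy, Finset.card_insert_of_notMem (by simp),
            if_pos (hesy.mpr hy)]
        · rw [if_neg hy, if_neg (fun h => hy (hesy.mp h)), add_zero]
      rw [hs] at c1 c2 ⊢
      rw [c1, c2]
      ring
  -- total counts of starts and ends agree
  have hsumA : ∑ x : C, A x = (Finset.univ.filter (fun i : Fin l => 1 ≤ K i)).card := by
    rw [Finset.card_eq_sum_card_fiberwise (f := fun i => a i)
      (t := Finset.univ) (fun _ _ => Finset.mem_univ _)]
    refine Finset.sum_congr rfl fun x _ => ?_
    rw [hA_def]
    rw [Finset.filter_filter]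
  have hsumE : ∑ x : C, E x = (Finset.univ.filter (fun i : Fin l => 1 ≤ K i)).card := by
    rw [Finset.card_eq_sum_card_fiberwise (f := fun i => e i)
      (t := Finset.univ) (fun _ _ => Finset.mem_univ _)]
    refine Finset.sum_congr rfl fun x _ => ?_
    rw [hE_def]
    rw [Finset.filter_filter]
  have halt : ∑ x : C, A (x + g) = ∑ x : C, A x :=
    Fintype.sum_equiv (Equiv.addRight g) _ _ (fun x => rfl)
  have heqAE : ∀ y, E y = A (y + g) := by
    have hss : ∑ y : C, E y = ∑ y : C, A (y + g) := by
      rw [halt, hsumE, hsumA]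
    intro y
    exact (Finset.sum_eq_sum_iff_of_le (fun y _ => hAE y)).mp hss y (Finset.mem_univ y)
  have hconst : ∀ y, ccnt g a K (y + g) = ccnt g a K y := by
    intro y
    have h := hkey y
    rw [heqAE y] at h
    omega
  have hconstall : ∀ (y : C) (j : ℕ), ccnt g a K (y + j • g) = ccnt g a K y := by
    intro y j
    induction j with
    | zero => simp
    | succ t ih => rw [succ_nsmul, ← add_assoc, hconst, ih]
  have hex : ∃ i, 1 ≤ K i := by
    by_contra hh
    push_neg at hh
    have : ∑ i, K i = 0 := Finset.sum_eq_zero (fun i _ => by have := hh i; omega)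
    omega
  obtain ⟨i0, hi0⟩ := hex
  have hone : ∀ x, ccnt g a K x = 1 := by
    intro x
    obtain ⟨j, hj⟩ := hgen (e i0) x
    rw [hj, hconstall, hcnt_e i0 hi0]
  have hfin : ∑ i, K i = n := by
    rw [← sum_ccnt g a K]
    simp [hone, hcard]
  omega


lemma main_ind {n : ℕ} {g : C} {l : ℕ} (a : Fin l → C)
    (hsh : ∀ K : Fin l → ℕ, (∀ x, CCov g a K x) → n < ∑ i, K i →
      ∃ i, 1 ≤ K i ∧ ∀ x, CCov g a (Function.update K i (K i - 1)) x)
    (hlb : ∀ K : Fin l → ℕ, (∀ x, CCov g a K x) → n ≤ ∑ i, K i) :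
    ∀ (N : ℕ) (K : Fin l → ℕ), ∑ i, K i = N → (∀ x, CCov g a K x) →
      ∃ m : Fin l → ℕ, (∀ i, m i ≤ K i) ∧ ∑ i, m i = n ∧ ∀ x, CCov g a m x := by
  intro N
  induction N using Nat.strong_induction_on with
  | _ N ih =>
    intro K hN hcov
    have hge := hlb K hcov
    rcases eq_or_lt_of_le hge with heq | hlt
    · exact ⟨K, fun i => le_refl _, heq.symm, hcov⟩
    · obtain ⟨i, hKi, hcov'⟩ := hsh K hcov hlt
      have hsum' : ∑ j, Function.update K i (K i - 1) j + 1 = ∑ j, K j := by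
        rw [Finset.sum_update_of_mem (Finset.mem_univ i)]
        have h1 : K i + ∑ j ∈ Finset.univ \ {i}, K j = ∑ j, K j := by
          rw [Finset.sum_eq_sum_sdiff_singleton_add (Finset.mem_univ i) K]
          ring
        omega
      obtain ⟨m, hm1, hm2, hm3⟩ := ih (∑ j, Function.update K i (K i - 1) j)
        (by omega) _ rfl hcov'
      refine ⟨m, fun j => le_trans (hm1 j) ?_, hm2, hm3⟩
      by_cases hji : j = i
      · subst hji; rw [Function.update_self]; omega
      · rw [Function.update_of_ne hji]

end CCLaux

/-- **Lemma (combinatorial covering lemma).**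
If a finite cyclic group `C` of order `n` with generator `g` is covered by `l`
arithmetic progressions with difference `g`, starting at `a i` and of length `k i + 1`,
then there exist pairwise disjoint starting segments of these progressions, of lengths
`m i ≤ k i + 1` with `m 1 + ⋯ + m l = n`, which still cover `C`. -/
theorem combinatorial_covering_lemma
    {C : Type*} [AddCommGroup C] [Fintype C]
    (n : ℕ) (hn : 1 ≤ n) (hcard : Fintype.card C = n)
    (g : C) (hg : ∀ x : C, ∃ m : ℤ, m • g = x)
    (l : ℕ) (hl : 1 ≤ l) (k : Fin l → ℕ) (a : Fin l → C)
    (hcover : (⋃ i : Fin l, { x : C | ∃ j : ℕ, j ≤ k i ∧ x = a i + j • g }) = Set.univ) :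
    ∃ m : Fin l → ℕ, (∀ i, m i ≤ k i + 1) ∧ (∑ i, m i) = n ∧
      (⋃ i : Fin l, { x : C | ∃ j : ℕ, j < m i ∧ x = a i + j • g }) = Set.univ := by
  classical
  have h0 : n • g = 0 := by rw [← hcard]; exact card_nsmul_eq_zero
  have hord : addOrderOf g = n := by
    have htop : AddSubgroup.zmultiples g = ⊤ := by
      ext x; simp [AddSubgroup.mem_zmultiples_iff, hg x]
    have h := Nat.card_zmultiples g
    rw [htop, AddSubgroup.card_top, Nat.card_eq_fintype_card, hcard] at h
    omega
  have hinj : ∀ p q : ℕ, p < n → q < n → p • g = q • g → p = q := by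
    intro p q hp hq h
    exact nsmul_injOn_Iio_addOrderOf (by rw [hord]; exact hp) (by rw [hord]; exact hq) h
  have hgen : ∀ x y : C, ∃ j : ℕ, y = x + j • g := by
    intro x y
    obtain ⟨mm, hmm⟩ := hg (y - x)
    refine ⟨(mm % (n : ℤ)).toNat, ?_⟩
    have hn0 : (n : ℤ) ≠ 0 := by positivity
    have h1 : (((mm % (n : ℤ)).toNat : ℤ)) = mm % (n : ℤ) :=
      Int.toNat_of_nonneg (Int.emod_nonneg mm hn0)
    have h2 : ((mm % (n : ℤ)).toNat : ℕ) • g = mm • g := by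
      rw [← natCast_zsmul, h1, Int.emod_def, sub_zsmul, mul_comm, mul_zsmul,
        natCast_zsmul, h0, smul_zero]
      simp
    rw [h2, hmm]
    abel
  have hcovP : ∀ x, CCLaux.CCov g a (fun i => k i + 1) x := by
    intro x
    have hx : x ∈ ⋃ i : Fin l, { x : C | ∃ j : ℕ, j ≤ k i ∧ x = a i + j • g } := by
      rw [hcover]; trivial
    simp only [Set.mem_iUnion, Set.mem_setOf_eq] at hx
    obtain ⟨i, j, hj, hxe⟩ := hx
    exact ⟨i, j, by simpa using Nat.lt_succ_iff.mpr hj, hxe⟩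
  obtain ⟨m, hm1, hm2, hm3⟩ := CCLaux.main_ind (n := n) (g := g) a
    (fun K hc hb => CCLaux.shrink hn hcard h0 hinj hgen hc hb)
    (fun K hc => CCLaux.le_sum_of_cover hcard g hc)
    (∑ i, (k i + 1)) (fun i => k i + 1) rfl hcovP
  refine ⟨m, hm1, hm2, ?_⟩
  apply Set.eq_univ_of_forall
  intro x
  obtain ⟨i, j, hj, hx⟩ := hm3 x
  exact Set.mem_iUnion.mpr ⟨i, ⟨j, hj, hx⟩⟩
end

section
/- Let H be a cancellative monoid, let T be a reduced commutative cancellative monoid, and let θ : H → T be a transfer homomorphism. Let a ∈ H and suppose a = ε·u₁⋯u_k with ε ∈ H^× a unit and u₁, …, u_k atoms of H, and let σ be a permutation of {1,…,k}. Then there exist atoms u₁′, …, u_k′ of H such that a = ε·u₁′⋯u_k′ and θ(u′_{σ(i)}) = θ(u_i) for all i ∈ {1,…,k}. -/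
/-- The set of lengths of `a`: all `k` such that `a = ε * u₁ ⋯ u_k` with `ε` a unit
and the `uᵢ` atoms (irreducible elements). -/
def SetOfLengths {H : Type*} [Monoid H] (a : H) : Set ℕ :=
  { k | ∃ (ε : H) (L : List H), IsUnit ε ∧ L.length = k ∧
      (∀ u ∈ L, Irreducible u) ∧ a = ε * L.prod }

/-- `θ : H →* T` is a weak transfer homomorphism: it is surjective with `θ⁻¹(1) = H^×`,
and every factorization of `θ a` into atoms of `T` lifts, up to permutation, to a
factorization of `a` into atoms of `H`. -/
def IsWeakTransferHom {H T : Type*} [Monoid H] [CommMonoid T] (θ : H →* T) : Prop :=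
  Function.Surjective θ ∧ (∀ a : H, θ a = 1 ↔ IsUnit a) ∧
    ∀ (a : H) (v : List T), v ≠ [] → (∀ t ∈ v, Irreducible t) → θ a = v.prod →
      ∃ u : List H, (∀ x ∈ u, Irreducible x) ∧ a = u.prod ∧ (u.map θ).Perm v

/-- `θ : H →* T` is a transfer homomorphism: it is surjective with `θ⁻¹(1) = H^×`, and
whenever `θ a = s * t`, there is a factorization `a = b * c` with `θ b = s`, `θ c = t`. -/
def IsTransferHom {H T : Type*} [Monoid H] [CommMonoid T] (θ : H →* T) : Prop :=
  Function.Surjective θ ∧ (∀ a : H, θ a = 1 ↔ IsUnit a) ∧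
    ∀ (a : H) (s t : T), θ a = s * t → ∃ b c : H, a = b * c ∧ θ b = s ∧ θ c = t

/-! In the commutative monoid `T`, `θ (u₁ ⋯ u_k) = θ (u_{σ⁻¹ 1}) ⋯ θ (u_{σ⁻¹ k})`. Splitting off
one factor at a time with (T2) lifts this to `u₁ ⋯ u_k = u₁' ⋯ u_k'` with
`θ (u'_i) = θ (u_{σ⁻¹ i})`. The `u'_i` are atoms because, `T` being reduced, `θ` reflects units
and hence both preserves and reflects atoms. -/

namespace IsTransferHom

variable {H T : Type*} [Monoid H] [CommMonoid T] {θ : H →* T}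

theorem isUnit_map_iff (hθ : IsTransferHom θ) (hred : ∀ t : T, IsUnit t → t = 1) {a : H} :
    IsUnit (θ a) ↔ IsUnit a :=
  ⟨fun h => (hθ.2.1 a).mp (hred _ h), fun h => h.map θ⟩

theorem irreducible_map_iff (hθ : IsTransferHom θ) (hred : ∀ t : T, IsUnit t → t = 1)
    {a : H} : Irreducible (θ a) ↔ Irreducible a := by
  have hunit := fun b : H => hθ.isUnit_map_iff hred (a := b)
  constructor
  · refine fun h => ⟨fun ha => h.not_isUnit ((hunit a).mpr ha), fun b c hbc => ?_⟩
    rw [← hunit b, ← hunit c]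
    exact h.isUnit_or_isUnit (by rw [hbc, map_mul])
  · refine fun h => ⟨fun ha => h.not_isUnit ((hunit a).mp ha), fun s t hst => ?_⟩
    obtain ⟨b, c, rfl, rfl, rfl⟩ := hθ.2.2 a s t hst
    rw [hunit b, hunit c]
    exact h.isUnit_or_isUnit rfl

theorem exists_map_eq_of_map_eq_prod_ofFn (hθ : IsTransferHom θ) :
    ∀ {k : ℕ} (a : H) (f : Fin (k + 1) → T), θ a = (List.ofFn f).prod →
      ∃ g : Fin (k + 1) → H, (∀ i, θ (g i) = f i) ∧ a = (List.ofFn g).prod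
  | 0, a, f, h => ⟨fun _ => a, fun i => by simpa [Fin.fin_one_eq_zero i] using h, by simp⟩
  | k + 1, a, f, h => by
    rw [List.ofFn_succ, List.prod_cons] at h
    obtain ⟨b, c, rfl, hb, hc⟩ := hθ.2.2 a _ _ h
    obtain ⟨g, hg, rfl⟩ := hθ.exists_map_eq_of_map_eq_prod_ofFn c _ hc
    refine ⟨Fin.cons b g, fun i => Fin.cases hb hg i, ?_⟩
    simp [List.ofFn_succ]

theorem exists_prod_ofFn_eq_of_perm (hθ : IsTransferHom θ) {k : ℕ} (u : Fin k → H)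
    (σ : Equiv.Perm (Fin k)) :
    ∃ g : Fin k → H, (List.ofFn g).prod = (List.ofFn u).prod ∧ ∀ i, θ (g (σ i)) = θ (u i) := by
  cases k with
  | zero => exact ⟨u, rfl, fun i => i.elim0⟩
  | succ k =>
    have hperm : θ (List.ofFn u).prod = (List.ofFn fun i => θ (u (σ.symm i))).prod := by
      rw [map_list_prod, List.map_ofFn, List.prod_ofFn, List.prod_ofFn]
      exact (Equiv.prod_comp σ.symm (θ ∘ u)).symm
    obtain ⟨g, hg, hprod⟩ := hθ.exists_map_eq_of_map_eq_prod_ofFn _ _ hperm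
    exact ⟨g, hprod.symm, fun i => by rw [hg, Equiv.symm_apply_apply]⟩

end IsTransferHom

theorem transferHom_permuted_factorization_general
    {H T : Type*} [CancelMonoid H] [CancelCommMonoid T]
    (hred : ∀ t : T, IsUnit t → t = 1)
    (θ : H →* T) (hθ : IsTransferHom θ)
    (a : H) (k : ℕ) (ε : H)
    (u : Fin k → H) (hu : ∀ i, Irreducible (u i))
    (ha : a = ε * (List.ofFn u).prod) (σ : Equiv.Perm (Fin k)) :
    ∃ u' : Fin k → H, (∀ i, Irreducible (u' i)) ∧ a = ε * (List.ofFn u').prod ∧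
      ∀ i, θ (u' (σ i)) = θ (u i) := by
  obtain ⟨u', hprod, hθu'⟩ := hθ.exists_prod_ofFn_eq_of_perm u σ
  refine ⟨u', fun i => ?_, by rw [hprod, ha], hθu'⟩
  rw [← hθ.irreducible_map_iff hred, ← σ.apply_symm_apply i, hθu']
  exact (hθ.irreducible_map_iff hred).mpr (hu _)

/-- If `θ : H → T` is a transfer homomorphism from a cancellative monoid to a reduced
commutative cancellative monoid, `a = ε · u₁ ⋯ u_k` is a factorization of `a` into a
unit `ε` and atoms `uᵢ`, and `σ` is a permutation of `{1, …, k}`, then there is a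
factorization `a = ε · u₁' ⋯ u_k'` into atoms with `θ (u'_{σ i}) = θ (u i)` for all `i`. -/
theorem transferHom_permuted_factorization
    {H T : Type*} [CancelMonoid H] [CancelCommMonoid T]
    (hred : ∀ t : T, IsUnit t → t = 1)
    (θ : H →* T) (hθ : IsTransferHom θ)
    (a : H) (k : ℕ) (ε : H) (hε : IsUnit ε)
    (u : Fin k → H) (hu : ∀ i, Irreducible (u i))
    (ha : a = ε * (List.ofFn u).prod) (σ : Equiv.Perm (Fin k)) :
    ∃ u' : Fin k → H, (∀ i, Irreducible (u' i)) ∧ a = ε * (List.ofFn u').prod ∧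
      ∀ i, θ (u' (σ i)) = θ (u i) :=
  transferHom_permuted_factorization_general hred θ hθ a k ε u hu ha σ
end

section
/- Let R be a ring without zero divisors (a domain, possibly noncommutative) such that every right ideal of R is projective as a right R-module and such that any two nonzero right ideals of R have nonzero intersection (i.e. R is uniform as a right module over itself). Let I, J, K be nonzero right ideals of R and suppose there is an isomorphism of right R-modules J ⊕ K ≅ R ⊕ I. Then at least one of the following holds: (a) there exist a nonzero right ideal J₀ of R with J₀ ≅ J as right R-modules and a right ideal N ⊆ K with N ≅ I and K/N ≅ R/J₀ as right R-modules; or (b) there exist a nonzero right ideal K₀ of R with K₀ ≅ K as right R-modules and a right ideal N ⊆ J with N ≅ I and J/N ≅ R/K₀ as right R-modules. -/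
private lemma aux_hnp {R : Type*} [Ring R]
    (I J K : Submodule Rᵐᵒᵖ R) (hJ : J ≠ ⊥)
    (f : (↥J × ↥K) →ₗ[Rᵐᵒᵖ] R)
    (hsurj : Function.Surjective f)
    (hinj : ∀ j : ↥J, f (j, 0) = 0 → j = 0)
    (eI : Nonempty (↥(LinearMap.ker f) ≃ₗ[Rᵐᵒᵖ] ↥I)) :
    ∃ (J₀ : Submodule Rᵐᵒᵖ R) (N : Submodule Rᵐᵒᵖ ↥K),
        J₀ ≠ ⊥ ∧ Nonempty (↥J₀ ≃ₗ[Rᵐᵒᵖ] ↥J) ∧ Nonempty (↥N ≃ₗ[Rᵐᵒᵖ] ↥I) ∧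
          Nonempty ((↥K ⧸ N) ≃ₗ[Rᵐᵒᵖ] (R ⧸ J₀)) := by
  obtain ⟨eI⟩ := eI
  set h : ↥J →ₗ[Rᵐᵒᵖ] R := f.comp (LinearMap.inl _ _ _) with hh
  set g : ↥K →ₗ[Rᵐᵒᵖ] R := f.comp (LinearMap.inr _ _ _) with hg
  have hfe : ∀ (j : ↥J) (k : ↥K), f (j, k) = h j + g k := by
    intro j k
    have h1 : ((j, k) : ↥J × ↥K) = (j, 0) + (0, k) := by simp
    rw [h1, map_add]; rfl
  have hinj' : Function.Injective h := by
    intro a b hab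
    have h1 : h (a - b) = 0 := by rw [map_sub, hab, sub_self]
    have := hinj (a - b) h1
    exact sub_eq_zero.mp this
  set J₀ : Submodule Rᵐᵒᵖ R := LinearMap.range h with hJ₀
  have hJ₀ne : J₀ ≠ ⊥ := by
    intro hb
    apply hJ
    rw [Submodule.eq_bot_iff]
    intro x hx
    have : h ⟨x, hx⟩ = 0 := by
      have := LinearMap.mem_range_self h ⟨x, hx⟩
      rw [hJ₀] at hb
      rw [hb] at this
      simpa using this
    have h2 : h ⟨x, hx⟩ = h 0 := by simpa using this
    exact congrArg Subtype.val (hinj' h2)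
  have eJ₀ : ↥J₀ ≃ₗ[Rᵐᵒᵖ] ↥J := (LinearEquiv.ofInjective h hinj').symm
  set q : ↥K →ₗ[Rᵐᵒᵖ] (R ⧸ J₀) := J₀.mkQ.comp g with hq
  have qsurj : Function.Surjective q := by
    intro x
    obtain ⟨r, rfl⟩ := Submodule.Quotient.mk_surjective J₀ x
    obtain ⟨⟨j, k⟩, hjk⟩ := hsurj r
    refine ⟨k, ?_⟩
    have : q k = Submodule.Quotient.mk (g k) := rfl
    rw [this]
    have hmem : h j ∈ J₀ := LinearMap.mem_range_self h j
    have hgk : g k = r - h j := by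
      rw [← hjk, hfe j k]; abel
    rw [hgk]
    rw [Submodule.Quotient.mk_sub]
    rw [(Submodule.Quotient.mk_eq_zero J₀).mpr hmem]
    simp
  set N : Submodule Rᵐᵒᵖ ↥K := LinearMap.ker q with hN
  have eQ : (↥K ⧸ N) ≃ₗ[Rᵐᵒᵖ] (R ⧸ J₀) := q.quotKerEquivOfSurjective qsurj
  -- N ≃ ker f
  have memN : ∀ x : ↥(LinearMap.ker f), ((x : ↥J × ↥K).2) ∈ N := by
    intro x
    have hx : f (x : ↥J × ↥K) = 0 := x.2
    rw [hN, LinearMap.mem_ker, hq]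
    have : g (x : ↥J × ↥K).2 = h (-(x : ↥J × ↥K).1) := by
      have heq := hfe (x : ↥J × ↥K).1 (x : ↥J × ↥K).2
      rw [Prod.mk.eta] at heq
      rw [heq] at hx
      rw [map_neg]
      exact (neg_eq_of_add_eq_zero_right hx).symm
    simp only [LinearMap.comp_apply, this]
    exact (Submodule.Quotient.mk_eq_zero J₀).mpr (LinearMap.mem_range_self h _)
  set m : ↥(LinearMap.ker f) →ₗ[Rᵐᵒᵖ] ↥N :=
    LinearMap.codRestrict N
      ((LinearMap.snd Rᵐᵒᵖ ↥J ↥K).comp (LinearMap.ker f).subtype) memN with hm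
  have mbij : Function.Bijective m := by
    constructor
    · intro x y hxy
      have h2 : (x : ↥J × ↥K).2 = (y : ↥J × ↥K).2 := congrArg Subtype.val hxy
      have hx : f (x : ↥J × ↥K) = 0 := x.2
      have hy : f (y : ↥J × ↥K) = 0 := y.2
      rw [← Prod.mk.eta (p := (x : ↥J × ↥K)), hfe] at hx
      rw [← Prod.mk.eta (p := (y : ↥J × ↥K)), hfe] at hy
      have : h (x : ↥J × ↥K).1 = h (y : ↥J × ↥K).1 := by
        rw [h2] at hx
        exact add_right_cancel (hx.trans hy.symm)
      have h1 := hinj' this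
      exact Subtype.ext (Prod.ext h1 h2)
    · intro k
      have hk : g (k : ↥K) ∈ J₀ := by
        have h0 : Submodule.Quotient.mk (g (k : ↥K)) = (0 : R ⧸ J₀) := k.2
        exact (Submodule.Quotient.mk_eq_zero J₀).mp h0
      obtain ⟨j, hj⟩ := hk
      have hker : f (-j, (k : ↥K)) = 0 := by
        rw [hfe, map_neg, hj]; abel
      refine ⟨⟨(-j, (k : ↥K)), hker⟩, ?_⟩
      apply Subtype.ext
      rfl
  have eN : ↥N ≃ₗ[Rᵐᵒᵖ] ↥I := ((LinearEquiv.ofBijective m mbij).symm).trans eI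
  exact ⟨J₀, N, hJ₀ne, ⟨eJ₀⟩, ⟨eN⟩, ⟨eQ⟩⟩

/-- Let `R` be a domain (possibly noncommutative) that is right hereditary (every right
ideal is projective as a right `R`-module) and right uniform (any two nonzero right
ideals intersect nontrivially).  If `I`, `J`, `K` are nonzero right ideals with
`J ⊕ K ≅ R ⊕ I` as right `R`-modules, then either there are a nonzero right ideal
`J₀ ≅ J` and a submodule `N ⊆ K` with `N ≅ I` and `K/N ≅ R/J₀`, or there are a nonzero
right ideal `K₀ ≅ K` and a submodule `N ⊆ J` with `N ≅ I` and `J/N ≅ R/K₀`.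

Right `R`-modules are modules over `Rᵐᵒᵖ`, and right ideals are `Rᵐᵒᵖ`-submodules
of `R`. -/
theorem hnp_schanuel_case
    {R : Type*} [Ring R] [IsDomain R]
    (hhered : ∀ M : Submodule Rᵐᵒᵖ R, Module.Projective Rᵐᵒᵖ M)
    (huniform : ∀ M N : Submodule Rᵐᵒᵖ R, M ≠ ⊥ → N ≠ ⊥ → M ⊓ N ≠ ⊥)
    (I J K : Submodule Rᵐᵒᵖ R) (hI : I ≠ ⊥) (hJ : J ≠ ⊥) (hK : K ≠ ⊥)
    (e : Nonempty ((↥J × ↥K) ≃ₗ[Rᵐᵒᵖ] (R × ↥I))) :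
    (∃ (J₀ : Submodule Rᵐᵒᵖ R) (N : Submodule Rᵐᵒᵖ ↥K),
        J₀ ≠ ⊥ ∧ Nonempty (↥J₀ ≃ₗ[Rᵐᵒᵖ] ↥J) ∧ Nonempty (↥N ≃ₗ[Rᵐᵒᵖ] ↥I) ∧
          Nonempty ((↥K ⧸ N) ≃ₗ[Rᵐᵒᵖ] (R ⧸ J₀))) ∨
    (∃ (K₀ : Submodule Rᵐᵒᵖ R) (N : Submodule Rᵐᵒᵖ ↥J),
        K₀ ≠ ⊥ ∧ Nonempty (↥K₀ ≃ₗ[Rᵐᵒᵖ] ↥K) ∧ Nonempty (↥N ≃ₗ[Rᵐᵒᵖ] ↥I) ∧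
          Nonempty ((↥J ⧸ N) ≃ₗ[Rᵐᵒᵖ] (R ⧸ K₀))) := by
  obtain ⟨e₀⟩ := e
  set f : (↥J × ↥K) →ₗ[Rᵐᵒᵖ] R := (LinearMap.fst Rᵐᵒᵖ R ↥I).comp e₀.toLinearMap with hf
  have hfapp : ∀ x : ↥J × ↥K, f x = (e₀ x).1 := fun x => rfl
  have hsurj : Function.Surjective f :=
    (Prod.fst_surjective).comp e₀.surjective
  -- ker f ≃ I
  have memI : ∀ x : ↥(LinearMap.ker f), True := fun _ => trivial
  set φ : ↥(LinearMap.ker f) →ₗ[Rᵐᵒᵖ] ↥I :=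
    (LinearMap.snd Rᵐᵒᵖ R ↥I).comp (e₀.toLinearMap.comp (LinearMap.ker f).subtype) with hφ
  have φbij : Function.Bijective φ := by
    constructor
    · intro x y hxy
      have h2 : (e₀ (x : ↥J × ↥K)).2 = (e₀ (y : ↥J × ↥K)).2 := hxy
      have hx : (e₀ (x : ↥J × ↥K)).1 = 0 := x.2
      have hy : (e₀ (y : ↥J × ↥K)).1 = 0 := y.2
      have : e₀ (x : ↥J × ↥K) = e₀ (y : ↥J × ↥K) := Prod.ext (hx.trans hy.symm) h2
      exact Subtype.ext (e₀.injective this)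
    · intro i
      have hker : f (e₀.symm (0, i)) = 0 := by
        rw [hfapp, e₀.apply_symm_apply]
      refine ⟨⟨e₀.symm (0, i), hker⟩, ?_⟩
      show (e₀ (e₀.symm (0, i))).2 = i
      rw [e₀.apply_symm_apply]
  have eKer : ↥(LinearMap.ker f) ≃ₗ[Rᵐᵒᵖ] ↥I := LinearEquiv.ofBijective φ φbij
  -- the injective map from ker f to R
  set c : ↥(LinearMap.ker f) →ₗ[Rᵐᵒᵖ] R := I.subtype.comp φ with hc
  have cinj : Function.Injective c := I.injective_subtype.comp φbij.1
  -- the two pieces of ker f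
  set T₁ : Submodule Rᵐᵒᵖ ↥(LinearMap.ker f) :=
    LinearMap.ker ((LinearMap.snd Rᵐᵒᵖ ↥J ↥K).comp (LinearMap.ker f).subtype) with hT₁
  set T₂ : Submodule Rᵐᵒᵖ ↥(LinearMap.ker f) :=
    LinearMap.ker ((LinearMap.fst Rᵐᵒᵖ ↥J ↥K).comp (LinearMap.ker f).subtype) with hT₂
  have hT12 : T₁ ⊓ T₂ = ⊥ := by
    rw [Submodule.eq_bot_iff]
    rintro x ⟨h1, h2⟩
    have e1 : (x : ↥J × ↥K).2 = 0 := h1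
    have e2 : (x : ↥J × ↥K).1 = 0 := h2
    exact Subtype.ext (Prod.ext e2 e1)
  have hmapbot : ∀ T : Submodule Rᵐᵒᵖ ↥(LinearMap.ker f),
      Submodule.map c T = ⊥ → T = ⊥ := by
    intro T hT
    rw [Submodule.eq_bot_iff]
    intro x hx
    have : c x ∈ Submodule.map c T := ⟨x, hx, rfl⟩
    rw [hT] at this
    have : c x = c 0 := by simpa using this
    exact cinj this
  have hcases : Submodule.map c T₁ = ⊥ ∨ Submodule.map c T₂ = ⊥ := by
    by_contra hcon
    push_neg at hcon
    apply huniform _ _ hcon.1 hcon.2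
    rw [← Submodule.map_inf _ cinj, hT12, Submodule.map_bot]
  rcases hcases with hcase | hcase
  · -- T₁ = ⊥ : f restricted to J is injective; left disjunct
    left
    have hT₁bot := hmapbot _ hcase
    have hinj : ∀ j : ↥J, f (j, 0) = 0 → j = 0 := by
      intro j hj
      have hmem : (⟨(j, 0), hj⟩ : ↥(LinearMap.ker f)) ∈ T₁ := by
        show ((⟨(j, 0), hj⟩ : ↥(LinearMap.ker f)) : ↥J × ↥K).2 = 0
        rfl
      rw [hT₁bot] at hmem
      have := congrArg (fun z : ↥(LinearMap.ker f) => (z : ↥J × ↥K).1) hmem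
      simpa using this
    exact aux_hnp I J K hJ f hsurj hinj ⟨eKer⟩
  · -- T₂ = ⊥ : f restricted to K is injective; right disjunct, swap roles
    right
    have hT₂bot := hmapbot _ hcase
    set σ : (↥K × ↥J) ≃ₗ[Rᵐᵒᵖ] (↥J × ↥K) := LinearEquiv.prodComm Rᵐᵒᵖ ↥K ↥J with hσ
    set f' : (↥K × ↥J) →ₗ[Rᵐᵒᵖ] R := f.comp σ.toLinearMap with hf'
    have hf'app : ∀ x : ↥K × ↥J, f' x = f (x.2, x.1) := fun x => rfl
    have hsurj' : Function.Surjective f' := hsurj.comp σ.surjective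
    have hinj' : ∀ k : ↥K, f' (k, 0) = 0 → k = 0 := by
      intro k hk
      have hk0 : f ((0 : ↥J), k) = 0 := hk
      have hmem : (⟨((0 : ↥J), k), hk0⟩ : ↥(LinearMap.ker f)) ∈ T₂ := rfl
      rw [hT₂bot] at hmem
      have := congrArg (fun z : ↥(LinearMap.ker f) => (z : ↥J × ↥K).2) hmem
      simpa using this
    -- ker f' ≃ ker f
    have memker : ∀ x : ↥(LinearMap.ker f'), σ (x : ↥K × ↥J) ∈ LinearMap.ker f :=
      fun x => x.2
    set ψ : ↥(LinearMap.ker f') →ₗ[Rᵐᵒᵖ] ↥(LinearMap.ker f) :=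
      LinearMap.codRestrict _ (σ.toLinearMap.comp (LinearMap.ker f').subtype) memker with hψ
    have ψbij : Function.Bijective ψ := by
      constructor
      · intro x y hxy
        exact Subtype.ext (σ.injective (congrArg Subtype.val hxy))
      · intro y
        have hmem : f' (σ.symm (y : ↥J × ↥K)) = 0 := by
          have : f' (σ.symm (y : ↥J × ↥K)) = f (σ (σ.symm (y : ↥J × ↥K))) := rfl
          rw [this, σ.apply_symm_apply]
          exact y.2
        refine ⟨⟨σ.symm (y : ↥J × ↥K), hmem⟩, ?_⟩
        apply Subtype.ext
        show σ (σ.symm (y : ↥J × ↥K)) = (y : ↥J × ↥K)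
        exact σ.apply_symm_apply _
    have eKer' : ↥(LinearMap.ker f') ≃ₗ[Rᵐᵒᵖ] ↥I :=
      (LinearEquiv.ofBijective ψ ψbij).trans eKer
    exact aux_hnp I K J hK f' hsurj' hinj' ⟨eKer'⟩
end
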